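/- arXiv:1305.4909 — 2 statements merged into one kernel-verified Lean document; each statement's English description precedes it below -/
import Mathlib

section
/- Let G be a finite graph and k ∈ ℕ, and let O be an orientation of the set S_k of all proper separations of G of order < k. Then O is consistent if and only if for every tree-decomposition (T,𝒱) of G of adhesion < k all of whose induced separations are proper, there is a node t of T such that O ∩ N = O(t), where N denotes the set of separations induced by the oriented edges of T. -/
open SimpleGraph Set

namespace CanonicalTD

variable {V : Type*} {ι : Type*}

/-- `p = (A,B)` is a separation of `G`: `A ∪ B = V` and no edge between `A∖B` and `B∖A`. -/
def IsSep (G : SimpleGraph V) (p : Set V × Set V) : Prop :=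
  p.1 ∪ p.2 = univ ∧ ∀ a ∈ p.1 \ p.2, ∀ b ∈ p.2 \ p.1, ¬G.Adj a b

/-- The order `|A ∩ B|` of a separation `(A,B)`. -/
noncomputable def sepOrder (p : Set V × Set V) : ℕ := (p.1 ∩ p.2).ncard

/-- A separation is proper if both `A∖B` and `B∖A` are nonempty. -/
def ProperSep (p : Set V × Set V) : Prop := (p.1 \ p.2).Nonempty ∧ (p.2 \ p.1).Nonempty

/-- The partial order on separations: `(A,B) ≤ (C,D)` iff `A ⊆ C` and `D ⊆ B`. -/
def SepLE (p q : Set V × Set V) : Prop := p.1 ⊆ q.1 ∧ q.2 ⊆ p.2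

/-- Two separations are nested if they become comparable after possibly inverting. -/
def Nested (p q : Set V × Set V) : Prop :=
  SepLE p q ∨ SepLE q p ∨ SepLE p q.swap ∨ SepLE q.swap p

/-- A separation `(A,B)` is tight if every vertex of `A ∩ B` has a neighbour in `A∖B`
and a neighbour in `B∖A`. -/
def TightSep (G : SimpleGraph V) (p : Set V × Set V) : Prop :=
  ∀ v ∈ p.1 ∩ p.2, (∃ a ∈ p.1 \ p.2, G.Adj v a) ∧ ∃ b ∈ p.2 \ p.1, G.Adj v b

/-- `S_k`: the set of all proper separations of `G` of order `< k`. -/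
def Sk (G : SimpleGraph V) (k : ℕ) : Set (Set V × Set V) :=
  {p | IsSep G p ∧ ProperSep p ∧ sepOrder p < k}

/-- A separation system of `G`: a set of separations closed under inverses. -/
def IsSepSystem (G : SimpleGraph V) (N : Set (Set V × Set V)) : Prop :=
  (∀ p ∈ N, IsSep G p) ∧ ∀ p ∈ N, p.swap ∈ N

def NestedSystem (N : Set (Set V × Set V)) : Prop :=
  ∀ p ∈ N, ∀ q ∈ N, Nested p q

def ProperSystem (N : Set (Set V × Set V)) : Prop := ∀ p ∈ N, ProperSep p

/-- An orientation of `N`: contains exactly one of `(A,B)`, `(B,A)` for each `(A,B) ∈ N`. -/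
def IsOrientation (N O : Set (Set V × Set V)) : Prop :=
  O ⊆ N ∧ ∀ p ∈ N, (p ∈ O ↔ p.swap ∉ O)

/-- Consistency: no distinct `(A,B),(C,D) ∈ O` with `(D,C) ≤ (A,B)`. -/
def Consistent (O : Set (Set V × Set V)) : Prop :=
  ∀ p ∈ O, ∀ q ∈ O, p ≠ q → ¬SepLE q.swap p

/-- A `k`-profile of `G`. -/
def IsProfile (G : SimpleGraph V) (k : ℕ) (P : Set (Set V × Set V)) : Prop :=
  IsOrientation (Sk G k) P ∧ Consistent P ∧
    ∀ p ∈ P, ∀ q ∈ P, (p.2 ∩ q.2, p.1 ∪ q.1) ∉ P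

/-- `(T, Vt)` is a tree-decomposition of `G`. -/
def IsTreeDecomp (G : SimpleGraph V) (T : SimpleGraph ι) (Vt : ι → Set V) : Prop :=
  T.IsTree ∧ (⋃ t, Vt t) = univ ∧
  (∀ u v, G.Adj u v → ∃ t, u ∈ Vt t ∧ v ∈ Vt t) ∧
  ∀ (t1 t3 : ι) (w : T.Walk t1 t3), w.IsPath →
    ∀ t2 ∈ w.support, Vt t1 ∩ Vt t3 ⊆ Vt t2

/-- The vertex set of the component of `T - t1t2` containing `t1`. -/
def side (T : SimpleGraph ι) (t1 t2 : ι) : Set ι :=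
  {s | (T.deleteEdges {s(t1, t2)}).Reachable t1 s}

/-- The separation induced by the oriented edge `(t1, t2)` of `T`. -/
def inducedSep (T : SimpleGraph ι) (Vt : ι → Set V) (t1 t2 : ι) : Set V × Set V :=
  (⋃ s ∈ side T t1 t2, Vt s, ⋃ s ∈ side T t2 t1, Vt s)

/-- The set of separations induced by oriented edges of `T`. -/
def inducedSeps (T : SimpleGraph ι) (Vt : ι → Set V) : Set (Set V × Set V) :=
  {p | ∃ t1 t2, T.Adj t1 t2 ∧ p = inducedSep T Vt t1 t2}

/-- `O(t)`: separations induced by oriented edges `(t1,t2)` with `t` in the component of `t2`. -/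
def Otow (T : SimpleGraph ι) (Vt : ι → Set V) (t : ι) : Set (Set V × Set V) :=
  {p | ∃ t1 t2, T.Adj t1 t2 ∧ t ∈ side T t2 t1 ∧ p = inducedSep T Vt t1 t2}

/-- The map assigning to each oriented edge of `T` its induced separation is a bijection
onto `N`. -/
def EdgeSepBij (T : SimpleGraph ι) (Vt : ι → Set V) (N : Set (Set V × Set V)) : Prop :=
  (∀ t1 t2, T.Adj t1 t2 → inducedSep T Vt t1 t2 ∈ N) ∧
  ∀ p ∈ N, ∃! e : ι × ι, T.Adj e.1 e.2 ∧ inducedSep T Vt e.1 e.2 = p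

/-- The tree-decomposition has adhesion `< k`. -/
def AdhesionLt (T : SimpleGraph ι) (Vt : ι → Set V) (k : ℕ) : Prop :=
  ∀ t1 t2, T.Adj t1 t2 → (Vt t1 ∩ Vt t2).ncard < k

/-- The tree-decomposition is canonical: the automorphism group of `G` acts on `T`
compatibly with the parts. -/
def Canonical (G : SimpleGraph V) (T : SimpleGraph ι) (Vt : ι → Set V) : Prop :=
  ∃ ρ : (G ≃g G) → (T ≃g T),
    (∀ φ ψ : G ≃g G, ρ (φ.trans ψ) = (ρ φ).trans (ρ ψ)) ∧
    ∀ (φ : G ≃g G) (t : ι), (⇑φ) '' Vt t = Vt (ρ φ t)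

/-- `X` is `(<k)`-inseparable in `G`. -/
def Inseparable' (G : SimpleGraph V) (k : ℕ) (X : Set V) : Prop :=
  ∀ p : Set V × Set V, IsSep G p → sepOrder p < k → X ⊆ p.1 ∨ X ⊆ p.2

/-- `X` is a `k`-block of `G`: a maximal `(<k)`-inseparable set of at least `k` vertices. -/
def IsBlock (G : SimpleGraph V) (k : ℕ) (X : Set V) : Prop :=
  k ≤ X.ncard ∧ Inseparable' G k X ∧
    ∀ Y, Inseparable' G k Y → X ⊆ Y → Y = X

/-- The `k`-profile `P_k(X)` induced by a `k`-block `X`. -/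
def blockProfile (G : SimpleGraph V) (k : ℕ) (X : Set V) : Set (Set V × Set V) :=
  {p | p ∈ Sk G k ∧ X ⊆ p.2 ∧ ¬X ⊆ p.1}

/-- `p` is a `≤`-maximal element of `M`. -/
def MaxIn (M : Set (Set V × Set V)) (p : Set V × Set V) : Prop :=
  p ∈ M ∧ ∀ q ∈ M, SepLE p q → q = p

/-- The `k`-block `X` is well separated in `S`: the maximal elements of `P_k(X) ∩ S`
are pairwise nested. -/
def WellSepIn (G : SimpleGraph V) (k : ℕ) (X : Set V) (S : Set (Set V × Set V)) : Prop :=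
  ∀ p q, MaxIn (blockProfile G k X ∩ S) p → MaxIn (blockProfile G k X ∩ S) q → Nested p q

/-- `D` is the vertex set of a component of `G - X`. -/
def IsCompOf (G : SimpleGraph V) (X D : Set V) : Prop :=
  D ⊆ Xᶜ ∧ (G.induce D).Connected ∧
    ∀ D', D ⊆ D' → D' ⊆ Xᶜ → (G.induce D').Connected → D' = D

/-- `S(X)`: the set of tight separations `(A,B)` with `X ⊆ B` and `A∖B` the vertex set of
a component of `G - X`. -/
def SX (G : SimpleGraph V) (X : Set V) : Set (Set V × Set V) :=
  {p | IsSep G p ∧ TightSep G p ∧ X ⊆ p.2 ∧ IsCompOf G X (p.1 \ p.2)}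

/-- `G` is `m`-connected. -/
def IsKConnected (G : SimpleGraph V) [Fintype V] (m : ℕ) : Prop :=
  m < Fintype.card V ∧ ∀ U : Set V, U.ncard < m → (G.induce Uᶜ).Connected

/-- The tree-decomposition distinguishes the set `Profs` of profiles. -/
def DistinguishesProfiles (T : SimpleGraph ι) (Vt : ι → Set V)
    (Profs : Set (Set (Set V × Set V))) : Prop :=
  ∀ P ∈ Profs, ∀ P' ∈ Profs, P ≠ P' → ∃ p ∈ inducedSeps T Vt, p ∈ P ∧ p.swap ∈ P'

/-- The tree-decomposition distinguishes every two distinct `k`-blocks efficiently. -/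
def DistinguishesBlocksEff (G : SimpleGraph V) (k : ℕ) (T : SimpleGraph ι)
    (Vt : ι → Set V) : Prop :=
  ∀ X X', IsBlock G k X → IsBlock G k X' → X ≠ X' →
    ∃ p ∈ inducedSeps T Vt, X ⊆ p.1 ∧ X' ⊆ p.2 ∧
      ∀ q : Set V × Set V, IsSep G q → X ⊆ q.1 → X' ⊆ q.2 → sepOrder p ≤ sepOrder q

/-!
Let `O` be consistent. Every edge of the decomposition tree induces a separation in `S_k`, so `O`
orients it. Among the edges `(x, y)` oriented by `O`, take one whose side `side T y x` is smallest;
then every edge points towards `y`. An edge pointing away from `y` on the far side of `xy` would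
point away from `(x, y)`, against consistency; one on the near side would have a smaller side.

Conversely, if `p, q ∈ O` and `q⁻¹ ≤ p`, the bags `q.2`, `p.1 ∩ q.1`, `p.2` on the path
`0 - 1 - 2` (the star with centre `1`) form a tree-decomposition whose edges induce `q⁻¹` and `p`.
`O` orients it towards no node: the nodes `0`, `1` would force `p⁻¹ ∈ O`, the node `2` `q⁻¹ ∈ O`.
-/

section Side

variable {T : SimpleGraph ι} {a b c d s x y : ι}

lemma mem_side_self (T : SimpleGraph ι) (a b : ι) : a ∈ side T a b := Reachable.refl a

lemma mem_side_of_adj (hxy : T.Adj x y) (hne : s(x, y) ≠ s(a, b)) (hx : x ∈ side T a b) :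
    y ∈ side T a b :=
  hx.trans (Adj.reachable (by simp [hne, hxy]))

lemma mem_side_or_mem_side (hT : T.Connected) (a b s : ι) :
    s ∈ side T a b ∨ s ∈ side T b a := by
  obtain ⟨w⟩ := hT.preconnected s a
  induction w with
  | nil => exact Or.inl (mem_side_self T _ b)
  | @cons u v a huv _ ih =>
    by_cases he : s(v, u) = s(a, b)
    · rcases Sym2.eq_iff.mp he with ⟨-, rfl⟩ | ⟨-, rfl⟩
      · exact Or.inr (mem_side_self T _ _)
      · exact Or.inl (mem_side_self T _ _)
    · have he' : s(v, u) ≠ s(b, a) := by rwa [Sym2.eq_swap (a := b)]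
      exact ih.imp (mem_side_of_adj huv.symm he) (mem_side_of_adj huv.symm he')

lemma notMem_side_of_mem_side (hT : T.IsAcyclic) (hab : T.Adj a b) (hs : s ∈ side T a b) :
    s ∉ side T b a := by
  intro hs'
  have hbr := isBridge_iff.mp (isAcyclic_iff_forall_adj_isBridge.mp hT hab)
  rw [side, Sym2.eq_swap] at hs'
  exact hbr (hs.trans hs'.symm)

lemma side_subset_side (ha : a ∉ side T d c) (hd : d ∈ side T b a) :
    side T d c ⊆ side T b a := by
  classical
  rintro y ⟨w⟩
  refine hd.trans ⟨(w.mapLe (deleteEdges_le _)).toDeleteEdges _ fun e he hba => ?_⟩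
  rw [mem_singleton_iff] at hba
  subst hba
  have hmem := Walk.snd_mem_support_of_mem_edges _ he
  rw [Walk.support_mapLe_eq_support] at hmem
  exact ha ⟨w.takeUntil a hmem⟩

end Side

section InducedSep

variable {T : SimpleGraph ι} {Vt : ι → Set V} {a b c d : ι}

lemma inducedSep_swap : inducedSep T Vt b a = (inducedSep T Vt a b).swap := rfl

lemma inducedSep_le_inducedSep (hac : side T a b ⊆ side T c d) (hdb : side T d c ⊆ side T b a) :
    SepLE (inducedSep T Vt a b) (inducedSep T Vt c d) :=
  ⟨biUnion_subset_biUnion_left hac, biUnion_subset_biUnion_left hdb⟩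

variable {G : SimpleGraph V}

lemma IsTreeDecomp.isSep_inducedSep (hTD : IsTreeDecomp G T Vt) (a b : ι) :
    IsSep G (inducedSep T Vt a b) := by
  have hT := hTD.1.connected
  refine ⟨eq_univ_of_forall fun v => ?_, ?_⟩
  · obtain ⟨t, hvt⟩ := mem_iUnion.mp (hTD.2.1 ▸ mem_univ v)
    exact (mem_side_or_mem_side hT a b t).imp (mem_biUnion · hvt) (mem_biUnion · hvt)
  · rintro u ⟨-, hu⟩ v ⟨-, hv⟩ huv
    obtain ⟨t, hut, hvt⟩ := hTD.2.2.1 u v huv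
    rcases mem_side_or_mem_side hT a b t with ht | ht
    · exact hv (mem_biUnion ht hvt)
    · exact hu (mem_biUnion ht hut)

lemma IsTreeDecomp.inducedSep_inter (hTD : IsTreeDecomp G T Vt) (hab : T.Adj a b) :
    (inducedSep T Vt a b).1 ∩ (inducedSep T Vt a b).2 = Vt a ∩ Vt b := by
  classical
  refine Subset.antisymm ?_ fun v ⟨hva, hvb⟩ =>
    ⟨mem_biUnion (mem_side_self T a b) hva, mem_biUnion (mem_side_self T b a) hvb⟩
  simp only [inducedSep, subset_def, mem_inter_iff, mem_iUnion]
  rintro v ⟨⟨s, hs, hvs⟩, ⟨s', hs', hvs'⟩⟩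
  obtain ⟨w⟩ := hTD.1.connected.preconnected s s'
  have hedge : s(a, b) ∈ w.bypass.edges := by
    by_contra he
    refine notMem_side_of_mem_side hTD.1.isAcyclic hab
      (hs.trans ⟨w.bypass.toDeleteEdges _ ?_⟩) hs'
    rintro e hee rfl
    exact he hee
  have hbag := hTD.2.2.2 s s' w.bypass w.bypass_isPath
  exact ⟨hbag a (Walk.fst_mem_support_of_mem_edges _ hedge) ⟨hvs, hvs'⟩,
    hbag b (Walk.snd_mem_support_of_mem_edges _ hedge) ⟨hvs, hvs'⟩⟩

lemma IsTreeDecomp.sepOrder_inducedSep (hTD : IsTreeDecomp G T Vt) (hab : T.Adj a b) :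
    sepOrder (inducedSep T Vt a b) = (Vt a ∩ Vt b).ncard := by
  rw [sepOrder, hTD.inducedSep_inter hab]

lemma IsTreeDecomp.inducedSep_mem_Sk {k : ℕ} (hTD : IsTreeDecomp G T Vt)
    (hAd : AdhesionLt T Vt k) (hab : T.Adj a b) (hprop : ProperSep (inducedSep T Vt a b)) :
    inducedSep T Vt a b ∈ Sk G k :=
  ⟨hTD.isSep_inducedSep a b, hprop, hTD.sepOrder_inducedSep hab ▸ hAd a b hab⟩

end InducedSep

lemma Consistent.not_sepLE_swap {O : Set (Set V × Set V)} {p q : Set V × Set V}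
    (hcons : Consistent O) (hp : p ∈ O) (hq : q ∈ O) (hprop : ProperSep p) :
    ¬SepLE q.swap p := by
  rintro hle
  obtain rfl | hpq := eq_or_ne p q
  · obtain ⟨v, hv2, hv1⟩ := hprop.2
    exact hv1 (hle.2 hv2)
  · exact hcons p hp q hq hpq hle

section Orientation

variable {T : SimpleGraph ι} {Vt : ι → Set V} {S O : Set (Set V × Set V)}

lemma exists_forall_mem_of_mem_side [Finite ι] (hT : T.IsTree) (hO : IsOrientation S O)
    (hcons : Consistent O) (hS : ∀ a b, T.Adj a b → inducedSep T Vt a b ∈ S)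
    (hprop : ∀ a b, T.Adj a b → ProperSep (inducedSep T Vt a b)) :
    ∃ t, ∀ a b, T.Adj a b → t ∈ side T b a → inducedSep T Vt a b ∈ O := by
  have hswap : ∀ a b, T.Adj a b → inducedSep T Vt a b ∉ O → inducedSep T Vt b a ∈ O :=
    fun a b hab h => (hO.2 _ (hS b a hab.symm)).mpr h
  set E : Set (ι × ι) := {e | T.Adj e.1 e.2 ∧ inducedSep T Vt e.1 e.2 ∈ O}
  rcases E.eq_empty_or_nonempty with hE | hE
  · refine ⟨hT.connected.nonempty.some, fun a b hab _ => ?_⟩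
    by_contra h
    exact eq_empty_iff_forall_notMem.mp hE (b, a) ⟨hab.symm, hswap a b hab h⟩
  obtain ⟨⟨x, y⟩, ⟨hxy, hxyO⟩, hmin⟩ :=
    E.exists_min_image (fun e => (side T e.2 e.1).ncard) E.toFinite hE
  refine ⟨y, fun a b hab hy => by_contra fun h => ?_⟩
  have hbaO := hswap a b hab h
  have hyab : y ∉ side T a b := notMem_side_of_mem_side hT.isAcyclic hab.symm hy
  rcases mem_side_or_mem_side hT.connected x y a with ha | ha
  · have hle : SepLE (inducedSep T Vt b a).swap (inducedSep T Vt x y) :=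
      inducedSep_le_inducedSep (side_subset_side hyab ha)
        (side_subset_side (notMem_side_of_mem_side hT.isAcyclic hxy ha) hy)
    exact hcons.not_sepLE_swap hxyO hbaO (hprop x y hxy) hle
  · have hne : s(y, x) ≠ s(b, a) := by
      intro he
      rcases Sym2.eq_iff.mp he with ⟨rfl, rfl⟩ | ⟨rfl, rfl⟩
      · exact notMem_side_of_mem_side hT.isAcyclic hxy (mem_side_self T _ _) ha
      · exact notMem_side_of_mem_side hT.isAcyclic hab (mem_side_self T _ _) hy
    have hxab : x ∉ side T a b :=
      fun hx => notMem_side_of_mem_side hT.isAcyclic hab hx (mem_side_of_adj hxy.symm hne hy)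
    have hlt : side T a b ⊂ side T y x :=
      ⟨side_subset_side hxab ha, fun hsub => hyab (hsub (mem_side_self T y x))⟩
    exact (ncard_lt_ncard hlt (toFinite _)).not_ge (hmin (b, a) ⟨hab.symm, hbaO⟩)

lemma inter_inducedSeps_eq_Otow (hT : T.Connected) (hO : IsOrientation S O)
    (hS : ∀ a b, T.Adj a b → inducedSep T Vt a b ∈ S) {t : ι}
    (ht : ∀ a b, T.Adj a b → t ∈ side T b a → inducedSep T Vt a b ∈ O) :
    O ∩ inducedSeps T Vt = Otow T Vt t := by
  ext p
  constructor
  · rintro ⟨hpO, a, b, hab, rfl⟩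
    refine ⟨a, b, hab, (mem_side_or_mem_side hT b a t).resolve_right fun hta => ?_, rfl⟩
    exact (hO.2 _ (hS a b hab)).mp hpO (ht b a hab.symm hta)
  · rintro ⟨a, b, hab, htb, rfl⟩
    exact ⟨ht a b hab htb, a, b, hab, rfl⟩

end Orientation

section Star

variable {r v x y z : ι}

lemma mem_support_starGraph_of_isPath {w : (starGraph r).Walk x y} (hw : w.IsPath) (hxy : x ≠ y)
    (hz : z ∈ w.support) : z = x ∨ z = y ∨ z = r := by
  have := (isAcyclic_starGraph r).subsingleton_path x y
  have huniq (q : (starGraph r).Path x y) : w = q :=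
    congrArg Subtype.val (Subsingleton.elim ⟨w, hw⟩ q)
  by_cases hx : x = r
  · subst hx
    cases huniq (Path.singleton (starGraph_center_adj hxy))
    simp only [Path.singleton, Walk.support_cons, Walk.support_nil, List.mem_cons,
      List.not_mem_nil, or_false] at hz
    tauto
  by_cases hy : y = r
  · subst hy
    cases huniq (Path.singleton (starGraph_center_adj' (Ne.symm hxy)))
    simp only [Path.singleton, Walk.support_cons, Walk.support_nil, List.mem_cons,
      List.not_mem_nil, or_false] at hz
    tauto
  have hpath : (Walk.cons (starGraph_center_adj' (Ne.symm hx))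
      (Walk.cons (starGraph_center_adj (Ne.symm hy)) Walk.nil)).IsPath := by
    simp [hx, hxy, Ne.symm hy]
  cases huniq ⟨_, hpath⟩
  simp only [Walk.support_cons, Walk.support_nil, List.mem_cons, List.not_mem_nil] at hz
  tauto

lemma side_starGraph_center (hv : v ≠ r) : side (starGraph r) r v = {v}ᶜ := by
  refine Subset.antisymm (fun s hs hsv => ?_) fun s hsv => ?_
  · rw [mem_singleton_iff] at hsv
    subst hsv
    exact notMem_side_of_mem_side (isAcyclic_starGraph r) (starGraph_center_adj' (Ne.symm hv))
      (mem_side_self _ s r) hs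
  · obtain rfl | hsr := eq_or_ne s r
    · exact mem_side_self _ s v
    · refine mem_side_of_adj (starGraph_center_adj (Ne.symm hsr)) ?_ (mem_side_self _ r v)
      simpa [Sym2.eq_iff, hsr] using hsv

lemma side_starGraph_of_ne (hv : v ≠ r) : side (starGraph r) v r = {v} := by
  refine Subset.antisymm (fun s hs => ?_) (singleton_subset_iff.mpr (mem_side_self _ v r))
  by_contra hsv
  refine notMem_side_of_mem_side (isAcyclic_starGraph r) (starGraph_center_adj' (Ne.symm hv)) hs ?_
  rw [side_starGraph_center hv]
  exact hsv

lemma isTreeDecomp_starGraph {G : SimpleGraph V} {Vt : ι → Set V} (hcover : (⋃ t, Vt t) = univ)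
    (hedge : ∀ u w, G.Adj u w → ∃ t, u ∈ Vt t ∧ w ∈ Vt t)
    (hcenter : ∀ x y, x ≠ y → Vt x ∩ Vt y ⊆ Vt r) : IsTreeDecomp G (starGraph r) Vt := by
  refine ⟨isTree_starGraph r, hcover, hedge, fun x y w hw z hz => ?_⟩
  obtain rfl | hxy := eq_or_ne x y
  · rw [Walk.nil_iff_support_eq.mp (Walk.isPath_iff_nil.mp hw), List.mem_singleton] at hz
    exact hz ▸ inter_subset_left
  rcases mem_support_starGraph_of_isPath hw hxy hz with rfl | rfl | rfl
  · exact inter_subset_left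
  · exact inter_subset_right
  · exact hcenter x y hxy

end Star

section PairBags

variable {G : SimpleGraph V} {k : ℕ} {p q : Set V × Set V}

lemma swap_mem_Sk (hp : p ∈ Sk G k) : p.swap ∈ Sk G k := by
  obtain ⟨⟨hcover, hedge⟩, ⟨h1, h2⟩, hord⟩ := hp
  refine ⟨⟨(union_comm _ _).trans hcover, fun a ha b hb hab => hedge b hb a ha hab.symm⟩,
    ⟨h2, h1⟩, ?_⟩
  rwa [sepOrder, Prod.fst_swap, Prod.snd_swap, inter_comm]

lemma IsSep.mem_or_mem (hp : IsSep G p) (v : V) : v ∈ p.1 ∨ v ∈ p.2 :=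
  show v ∈ p.1 ∪ p.2 from hp.1 ▸ mem_univ v

lemma IsSep.adj_mem_or_adj_mem (hp : IsSep G p) {u v : V} (huv : G.Adj u v) :
    (u ∈ p.1 ∧ v ∈ p.1) ∨ (u ∈ p.2 ∧ v ∈ p.2) := by
  have hu := hp.mem_or_mem u
  have hv := hp.mem_or_mem v
  have h1 := hp.2 u
  have h2 := hp.2 v
  simp only [mem_sdiff] at h1 h2
  have := huv.symm
  tauto

lemma starGraph_one_adj_fin_three {a b : Fin 3} (hab : (starGraph 1).Adj a b) :
    (a = 0 ∧ b = 1) ∨ (a = 1 ∧ b = 0) ∨ (a = 1 ∧ b = 2) ∨ (a = 2 ∧ b = 1) := by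
  revert a b
  decide

def pairBags (p q : Set V × Set V) : Fin 3 → Set V := ![q.2, p.1 ∩ q.1, p.2]

lemma inducedSep_pairBags_zero_one (hp : IsSep G p) (hle : SepLE q.swap p) :
    inducedSep (starGraph 1) (pairBags p q) 0 1 = q.swap := by
  have hcompl : ({0}ᶜ : Set (Fin 3)) = {1, 2} := by ext i; fin_cases i <;> simp
  rw [inducedSep, side_starGraph_of_ne (by decide), side_starGraph_center (by decide), hcompl,
    biUnion_singleton, biUnion_pair]
  refine Prod.ext rfl ((union_subset inter_subset_right hle.2).antisymm fun v hv => ?_)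
  exact (hp.mem_or_mem v).imp (⟨·, hv⟩) id

lemma inducedSep_pairBags_one_two (hq : IsSep G q) (hle : SepLE q.swap p) :
    inducedSep (starGraph 1) (pairBags p q) 1 2 = p := by
  have hcompl : ({2}ᶜ : Set (Fin 3)) = {0, 1} := by ext i; fin_cases i <;> simp
  rw [inducedSep, side_starGraph_of_ne (by decide), side_starGraph_center (by decide), hcompl,
    biUnion_singleton, biUnion_pair]
  refine Prod.ext ((union_subset hle.1 inter_subset_left).antisymm fun v hv => ?_) rfl
  exact (hq.mem_or_mem v).symm.imp id (⟨hv, ·⟩)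

lemma isTreeDecomp_pairBags (hp : IsSep G p) (hq : IsSep G q) (hle : SepLE q.swap p) :
    IsTreeDecomp G (starGraph 1) (pairBags p q) := by
  refine isTreeDecomp_starGraph (eq_univ_of_forall fun v => mem_iUnion.mpr ?_)
    (fun u v huv => ?_) ?_
  · by_cases hq2 : v ∈ q.2
    · exact ⟨0, hq2⟩
    by_cases hp2 : v ∈ p.2
    · exact ⟨2, hp2⟩
    exact ⟨1, (hp.mem_or_mem v).resolve_right hp2, (hq.mem_or_mem v).resolve_right hq2⟩
  · rcases hq.adj_mem_or_adj_mem huv with ⟨huq, hvq⟩ | huvq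
    · rcases hp.adj_mem_or_adj_mem huv with ⟨hup, hvp⟩ | huvp
      · exact ⟨1, ⟨hup, huq⟩, ⟨hvp, hvq⟩⟩
      · exact ⟨2, huvp⟩
    · exact ⟨0, huvq⟩
  · intro x y hxy
    obtain rfl | hx := eq_or_ne x 1
    · exact inter_subset_left
    obtain rfl | hy := eq_or_ne y 1
    · exact inter_subset_right
    have hcenter : q.2 ∩ p.2 ⊆ p.1 ∩ q.1 := fun v hv => ⟨hle.1 hv.1, hle.2 hv.2⟩
    fin_cases x <;> fin_cases y <;> simp_all [pairBags, inter_comm]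

theorem consistent_of_forall_exists_eq_Otow {O : Set (Set V × Set V)}
    (hO : IsOrientation (Sk G k) O)
    (h : ∀ (ι : Type) (_ : Fintype ι) (T : SimpleGraph ι) (Vt : ι → Set V),
        IsTreeDecomp G T Vt → AdhesionLt T Vt k →
        (∀ p ∈ inducedSeps T Vt, ProperSep p) →
        ∃ t : ι, O ∩ inducedSeps T Vt = Otow T Vt t) :
    Consistent O := by
  intro p hp q hq _ hle
  have hpS := hO.1 hp
  have hqS := hO.1 hq
  have hTD := isTreeDecomp_pairBags hpS.1 hqS.1 hle
  have h01 := inducedSep_pairBags_zero_one hpS.1 hle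
  have h12 := inducedSep_pairBags_one_two hqS.1 hle
  have hSk (a b : Fin 3) (hab : (starGraph 1).Adj a b) :
      inducedSep (starGraph 1) (pairBags p q) a b ∈ Sk G k := by
    rcases starGraph_one_adj_fin_three hab with
      ⟨rfl, rfl⟩ | ⟨rfl, rfl⟩ | ⟨rfl, rfl⟩ | ⟨rfl, rfl⟩
    · rw [h01]; exact swap_mem_Sk hqS
    · rw [inducedSep_swap, h01]; exact hqS
    · rw [h12]; exact hpS
    · rw [inducedSep_swap, h12]; exact swap_mem_Sk hpS
  obtain ⟨t, ht⟩ := h (Fin 3) inferInstance (starGraph 1) (pairBags p q) hTD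
    (fun a b hab => hTD.sepOrder_inducedSep hab ▸ (hSk a b hab).2.2)
    (by rintro _ ⟨a, b, hab, rfl⟩; exact (hSk a b hab).2.1)
  by_cases ht2 : t = 2
  · have hqt : q.swap ∈ Otow (starGraph 1) (pairBags p q) t :=
      ⟨0, 1, by decide, by simp [side_starGraph_center, ht2], h01.symm⟩
    exact (hO.2 q hqS).mp hq (ht ▸ hqt).1
  · have hpt : p.swap ∈ Otow (starGraph 1) (pairBags p q) t :=
      ⟨2, 1, by decide, by simpa [side_starGraph_center], by rw [inducedSep_swap, h12]⟩
    exact (hO.2 p hpS).mp hp (ht ▸ hpt).1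

end PairBags

theorem stmt_1_general {V : Type*} (G : SimpleGraph V) (k : ℕ)
    (O : Set (Set V × Set V)) (hO : IsOrientation (Sk G k) O) :
    Consistent O ↔
      ∀ (ι : Type) (_ : Fintype ι) (T : SimpleGraph ι) (Vt : ι → Set V),
        IsTreeDecomp G T Vt → AdhesionLt T Vt k →
        (∀ p ∈ inducedSeps T Vt, ProperSep p) →
        ∃ t : ι, O ∩ inducedSeps T Vt = Otow T Vt t := by
  refine ⟨fun hcons ι _ T Vt hTD hAd hprop => ?_, consistent_of_forall_exists_eq_Otow hO⟩
  have hprop' (a b : ι) (hab : T.Adj a b) : ProperSep (inducedSep T Vt a b) :=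
    hprop _ ⟨a, b, hab, rfl⟩
  have hSk (a b : ι) (hab : T.Adj a b) : inducedSep T Vt a b ∈ Sk G k :=
    hTD.inducedSep_mem_Sk hAd hab (hprop' a b hab)
  obtain ⟨t, ht⟩ := exists_forall_mem_of_mem_side hTD.1 hO hcons hSk hprop'
  exact ⟨t, inter_inducedSeps_eq_Otow hTD.1.connected hO hSk ht⟩

/-- Theorem 1.1(ii): an orientation of `S_k` is consistent iff it orients the separations
induced by any tree-decomposition of adhesion `< k` (with proper induced separations)
towards a node of its decomposition tree. -/
theorem stmt_1 {V : Type*} [Fintype V] (G : SimpleGraph V) (k : ℕ)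
    (O : Set (Set V × Set V)) (hO : IsOrientation (Sk G k) O) :
    Consistent O ↔
      ∀ (ι : Type) (_ : Fintype ι) (T : SimpleGraph ι) (Vt : ι → Set V),
        IsTreeDecomp G T Vt → AdhesionLt T Vt k →
        (∀ p ∈ inducedSeps T Vt, ProperSep p) →
        ∃ t : ι, O ∩ inducedSeps T Vt = Otow T Vt t :=
  stmt_1_general G k O hO

end CanonicalTD
end

section
/- Let G be a finite graph, k ∈ ℕ, and let X be a k-block of G. If some separation (A,B) ∈ S(X) has order at least k, then X is not well separated in the set S_k of all proper separations of G of order < k: there exist two crossing ≤-maximal elements of P_k(X). Consequently, if X is well separated in S_k, then every separation in S(X) has order < k. -/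
open SimpleGraph Set

namespace CanonicalTD

variable {V : Type*} {ι : Type*}

/-!
Suppose the maximal elements of `P_k(X)` are pairwise nested and let `(A,B) ∈ S(X)`, with
`D = A ∖ B`. Maximality of the block puts every vertex outside `X` into the strict side
`m.1 ∖ m.2` of some maximal `m`, and nestedness forbids edges between the strict sides of two
distinct maximal elements; so the connected set `D` lies in a single strict side `m.1 ∖ m.2`.
Tightness puts `A ∩ B` inside `X ⊆ m.2` and gives every vertex of `A ∩ B` a neighbour in `D`,
hence `A ∩ B ⊆ m.1 ∩ m.2` and `|A ∩ B| ≤ |m.1 ∩ m.2| < k`.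
-/

section Separations

variable {G : SimpleGraph V} {p : Set V × Set V}

lemma IsSep.swap (h : IsSep G p) : IsSep G p.swap :=
  ⟨by rw [Prod.fst_swap, Prod.snd_swap, union_comm, h.1],
    fun a ha b hb hab => h.2 b hb a ha hab.symm⟩

lemma IsSep.mem_or (h : IsSep G p) (v : V) : v ∈ p.1 ∨ v ∈ p.2 :=
  (h.1 ▸ mem_univ v : v ∈ p.1 ∪ p.2)

lemma IsSep.mem_fst_of_adj (h : IsSep G p) {u v : V} (hv : v ∈ p.1 \ p.2) (huv : G.Adj u v) :
    u ∈ p.1 := by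
  by_contra hu
  exact h.2 v hv u ⟨(h.mem_or u).resolve_left hu, hu⟩ huv.symm

lemma sepOrder_swap (p : Set V × Set V) : sepOrder p.swap = sepOrder p := by
  rw [sepOrder, sepOrder, Prod.fst_swap, Prod.snd_swap, inter_comm]

lemma exists_maxIn_sepLE [Finite V] {M : Set (Set V × Set V)} (hp : p ∈ M) :
    ∃ m, MaxIn M m ∧ SepLE p m := by
  -- `SepLE` is the product order on `Set V × (Set V)ᵒᵈ`
  let e : Set V × Set V ≃ Set V × (Set V)ᵒᵈ := Equiv.prodCongr (Equiv.refl _) OrderDual.toDual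
  obtain ⟨b, hpb, hb⟩ := (M.toFinite.image e).exists_le_maximal (mem_image_of_mem e hp)
  obtain ⟨m, hm, rfl⟩ := hb.prop
  exact ⟨m, ⟨hm, fun q hq hmq => e.injective
    (le_antisymm (hb.2 (mem_image_of_mem e hq) hmq) hmq)⟩, hpb⟩

lemma connected_induce_insert {D : Set V} {u v : V} (hD : (G.induce D).Connected) (hv : v ∈ D)
    (huv : G.Adj u v) : (G.induce (insert u D)).Connected := by
  rw [connected_induce_iff] at hD ⊢
  have hcover : ({u, v} : Set V) ∪ D = insert u D := by
    rw [insert_union, singleton_union, insert_eq_of_mem hv]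
  exact hcover ▸ Subgraph.induce_union_connected (Subgraph.top_induce_pair_connected_of_adj huv).preconnected
    hD.preconnected ⟨v, by simp, hv⟩

end Separations

section Block

variable {G : SimpleGraph V} {k : ℕ} {X : Set V}

lemma IsBlock.exists_mem_blockProfile (hX : IsBlock G k X) {v : V} (hv : v ∉ X) :
    ∃ r ∈ blockProfile G k X, v ∈ r.1 \ r.2 := by
  have hsep : ¬Inseparable' G k (insert v X) := fun h =>
    hv (hX.2.2 _ h (subset_insert v X) ▸ mem_insert v X)
  simp only [Inseparable', not_forall, not_or] at hsep
  obtain ⟨q, hq, hqk, hq1, hq2⟩ := hsep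
  obtain ⟨r, hr, hrk, hXr, hr1, hr2⟩ : ∃ r, IsSep G r ∧ sepOrder r < k ∧ X ⊆ r.2 ∧
      ¬insert v X ⊆ r.1 ∧ ¬insert v X ⊆ r.2 := by
    rcases hX.2.1 q hq hqk with hX1 | hX2
    · exact ⟨q.swap, hq.swap, (sepOrder_swap q).symm ▸ hqk, hX1, hq2, hq1⟩
    · exact ⟨q, hq, hqk, hX2, hq1, hq2⟩
  have hv2 : v ∉ r.2 := fun h => hr2 (insert_subset h hXr)
  have hv1 : v ∈ r.1 := (hr.mem_or v).resolve_right hv2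
  have hXr1 : ¬X ⊆ r.1 := fun h => hr1 (insert_subset hv1 h)
  obtain ⟨x, hx, hx1⟩ := not_subset.mp hXr1
  exact ⟨r, ⟨⟨hr, ⟨⟨v, hv1, hv2⟩, x, hXr hx, hx1⟩, hrk⟩, hXr, hXr1⟩, hv1, hv2⟩

lemma IsBlock.exists_maxIn_mem [Finite V] (hX : IsBlock G k X) {v : V} (hv : v ∉ X) :
    ∃ m, MaxIn (blockProfile G k X) m ∧ v ∈ m.1 \ m.2 := by
  obtain ⟨r, hr, hv1, hv2⟩ := hX.exists_mem_blockProfile hv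
  obtain ⟨m, hm, hrm⟩ := exists_maxIn_sepLE hr
  exact ⟨m, hm, hrm.1 hv1, fun h => hv2 (hrm.2 h)⟩

lemma MaxIn.fst_subset_snd_of_nested {m m' : Set V × Set V}
    (hm : MaxIn (blockProfile G k X) m) (hm' : MaxIn (blockProfile G k X) m') (hne : m ≠ m')
    (hmm' : Nested m m') : m.1 ⊆ m'.2 := by
  rcases hmm' with h | h | h | h
  · exact absurd (hm.2 m' hm'.1 h) hne.symm
  · exact absurd (hm'.2 m hm.1 h) hne
  · exact h.1
  · exact absurd (hm.1.2.1.trans h.2) hm'.1.2.2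

lemma eq_of_adj_of_nested
    (hnest : ∀ p q, MaxIn (blockProfile G k X) p → MaxIn (blockProfile G k X) q → Nested p q)
    {m m' : Set V × Set V} (hm : MaxIn (blockProfile G k X) m)
    (hm' : MaxIn (blockProfile G k X) m') {u v : V} (hu : u ∈ m.1 \ m.2) (hv : v ∈ m'.1 \ m'.2)
    (huv : G.Adj u v) : m = m' := by
  by_contra hne
  have hu' : u ∈ m'.1 := hm'.1.1.1.mem_fst_of_adj hv huv
  exact hu.2 (hm'.fst_subset_snd_of_nested hm (Ne.symm hne) (hnest m' m hm' hm) hu')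

lemma IsBlock.subset_of_preconnected_of_nested [Finite V] (hX : IsBlock G k X)
    (hnest : ∀ p q, MaxIn (blockProfile G k X) p → MaxIn (blockProfile G k X) q → Nested p q)
    {D : Set V} (hD : (G.induce D).Preconnected) (hDX : D ⊆ Xᶜ) {m : Set V × Set V}
    (hm : MaxIn (blockProfile G k X) m) {d₀ : V} (hd₀ : d₀ ∈ D) (hd₀m : d₀ ∈ m.1 \ m.2) :
    D ⊆ m.1 \ m.2 := by
  intro d hd
  by_contra hdm
  obtain ⟨w⟩ := hD ⟨d₀, hd₀⟩ ⟨d, hd⟩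
  obtain ⟨e, -, he₁, he₂⟩ := w.exists_boundary_dart {z | z.1 ∈ m.1 \ m.2} hd₀m hdm
  obtain ⟨m', hm', hm'e⟩ := hX.exists_maxIn_mem (hDX e.snd.2)
  exact he₂ (eq_of_adj_of_nested hnest hm hm' he₁ hm'e e.adj ▸ hm'e)

lemma sep_subset_of_mem_SX {p : Set V × Set V} (hp : p ∈ SX G X) : p.1 ∩ p.2 ⊆ X := by
  obtain ⟨-, hTight, -, hDX, hDconn, hDmax⟩ := hp
  intro w hw
  by_contra hwX
  obtain ⟨⟨a, ha, hwa⟩, -⟩ := hTight w hw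
  have hins : insert w (p.1 \ p.2) ⊆ Xᶜ := insert_subset hwX hDX
  have hwD : w ∈ p.1 \ p.2 :=
    hDmax _ (subset_insert _ _) hins (connected_induce_insert hDconn ha hwa) ▸ mem_insert _ _
  exact hwD.2 hw.2

lemma IsBlock.sepOrder_lt_of_nested [Finite V] (hX : IsBlock G k X)
    (hnest : ∀ p q, MaxIn (blockProfile G k X) p → MaxIn (blockProfile G k X) q → Nested p q)
    {p : Set V × Set V} (hp : p ∈ SX G X) : sepOrder p < k := by
  have hN := sep_subset_of_mem_SX hp
  obtain ⟨-, hTight, -, hDX, hDconn, -⟩ := hp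
  obtain ⟨⟨d₀, hd₀⟩⟩ := hDconn.nonempty
  obtain ⟨m, hm, hd₀m⟩ := hX.exists_maxIn_mem (hDX hd₀)
  have hD := hX.subset_of_preconnected_of_nested hnest hDconn.preconnected hDX hm hd₀ hd₀m
  have hNm : p.1 ∩ p.2 ⊆ m.1 ∩ m.2 := fun x hx =>
    have ⟨⟨d, hd, hxd⟩, _⟩ := hTight x hx
    ⟨hm.1.1.1.mem_fst_of_adj (hD hd) hxd, hm.1.2.1 (hN hx)⟩
  exact (ncard_le_ncard hNm (toFinite _)).trans_lt hm.1.1.2.2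

end Block

/-- If some separation in `S(X)` has order at least `k`, then `X` is not well separated in
`S_k`: there are two crossing `≤`-maximal elements of `P_k(X)`. Consequently, if `X` is
well separated in `S_k` then every separation in `S(X)` has order `< k`. -/
theorem stmt_13 {V : Type*} [Fintype V] (G : SimpleGraph V) (k : ℕ)
    (X : Set V) (hX : IsBlock G k X) :
    ((∃ p ∈ SX G X, k ≤ sepOrder p) →
      ∃ p q : Set V × Set V, MaxIn (blockProfile G k X) p ∧
        MaxIn (blockProfile G k X) q ∧ ¬Nested p q) ∧
    ((∀ p q : Set V × Set V, MaxIn (blockProfile G k X) p →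
        MaxIn (blockProfile G k X) q → Nested p q) →
      ∀ p ∈ SX G X, sepOrder p < k) := by
  refine ⟨fun ⟨p, hp, hkp⟩ => ?_, fun hnest p hp => hX.sepOrder_lt_of_nested hnest hp⟩
  by_contra! hnest
  exact (hX.sepOrder_lt_of_nested hnest hp).not_ge hkp

end CanonicalTD
end
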